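/- arXiv:2602.01499 — 3 statements merged into one kernel-verified Lean document; each statement's English description precedes it below -/
import Mathlib

section
/- If the rooted graph (H,K_H) is a rooted minor of (G,K_G), then the K-free treewidth satisfies tw_K(H,K_H) ≤ tw_K(G,K_G). -/
namespace TDMPaper

/-- A finite multigraph without loops: edges carry their unordered pair of endpoints. -/
structure MGraph where
  V : Type
  E : Type
  finV : Finite V
  finE : Finite E
  ends : E → Sym2 V
  loopless : ∀ e, ¬ (ends e).IsDiag

attribute [instance] MGraph.finV MGraph.finE

namespace MGraph

/-- A cycle in a multigraph, given by cyclically ordered distinct vertices and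
distinct edges. -/
structure Cycle (G : MGraph) where
  n : ℕ
  npos : 0 < n
  vtx : Fin n → G.V
  edge : Fin n → G.E
  vtx_inj : Function.Injective vtx
  edge_inj : Function.Injective edge
  ends_eq : ∀ i : Fin n,
    G.ends (edge i) = s(vtx i, vtx ⟨(i.1 + 1) % n, Nat.mod_lt _ npos⟩)

/-- The parity of a cycle with respect to a signing `γ`. -/
def Cycle.parity {G : MGraph} (C : G.Cycle) (γ : G.E → ZMod 2) : ZMod 2 :=
  ∑ i, γ (C.edge i)

/-- The vertex set of a cycle. -/
def Cycle.support {G : MGraph} (C : G.Cycle) : Set G.V := Set.range C.vtx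

/-- The odd cycle packing number of a signed graph: the maximum number of pairwise
vertex-disjoint odd cycles. -/
noncomputable def OCP (G : MGraph) (γ : G.E → ZMod 2) : ℕ :=
  sSup {k : ℕ | ∃ C : Fin k → G.Cycle,
    (∀ i, (C i).parity γ = 1) ∧
    ∀ i j, i ≠ j → Disjoint ((C i).support) ((C j).support)}

/-- The subgraph induced by a vertex set `S` (kept on the same vertex type; only
edges with both endpoints in `S` survive). -/
def induce (G : MGraph) (S : Set G.V) : MGraph where
  V := G.V
  E := {e : G.E // ∀ v ∈ G.ends e, v ∈ S}
  finV := G.finV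
  finE := inferInstance
  ends := fun e => G.ends e.1
  loopless := fun e => G.loopless e.1

/-- The odd cycle packing number of the subgraph induced on `S`, signs inherited. -/
noncomputable def OCPOn (G : MGraph) (γ : G.E → ZMod 2) (S : Set G.V) : ℕ :=
  (G.induce S).OCP (fun e => γ e.1)

/-- A path in a multigraph. -/
structure Path (G : MGraph) where
  n : ℕ
  vtx : Fin (n + 1) → G.V
  edge : Fin n → G.E
  vtx_inj : Function.Injective vtx
  ends_eq : ∀ i : Fin n, G.ends (edge i) = s(vtx i.castSucc, vtx i.succ)

def Path.first {G : MGraph} (P : G.Path) : G.V := P.vtx 0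
def Path.last {G : MGraph} (P : G.Path) : G.V := P.vtx (Fin.last P.n)
def Path.support {G : MGraph} (P : G.Path) : Set G.V := Set.range P.vtx
def Path.internals {G : MGraph} (P : G.Path) : Set G.V :=
  P.support \ {P.first, P.last}
def Path.parity {G : MGraph} (P : G.Path) (γ : G.E → ZMod 2) : ZMod 2 :=
  ∑ i, γ (P.edge i)

end MGraph

open MGraph

/-- `γ'` is obtained from `γ` by a sequence of shiftings at vertices. -/
def IsShift (G : MGraph) (γ γ' : G.E → ZMod 2) : Prop :=
  ∃ σ : G.V → ZMod 2, ∀ e u v, G.ends e = s(u, v) → γ' e = γ e + σ u + σ v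

/-- A minor model of `H` in `G`: disjoint nonempty connected branch sets and an
injective assignment of edges. -/
structure MinorModel (H G : MGraph) where
  bs : H.V → Set G.V
  em : H.E → G.E
  bs_nonempty : ∀ v, (bs v).Nonempty
  bs_disjoint : ∀ u v, u ≠ v → Disjoint (bs u) (bs v)
  bs_connected : ∀ v, ∀ a ∈ bs v, ∀ b ∈ bs v,
    Relation.ReflTransGen
      (fun x y => x ∈ bs v ∧ y ∈ bs v ∧ ∃ e, G.ends e = s(x, y)) a b
  em_inj : Function.Injective em
  em_ends : ∀ eH u v, H.ends eH = s(u, v) →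
    ∃ a ∈ bs u, ∃ b ∈ bs v, G.ends (em eH) = s(a, b)

/-- `H` is a minor of `G`. -/
def IsMinor (H G : MGraph) : Prop := Nonempty (MinorModel H G)

/-- `(H,KH)` is a rooted minor of `(G,KG)`: there is a minor model in which the
branch set of every root of `H` contains a root of `G`. -/
def IsRootedMinor (H : MGraph) (KH : Set H.V) (G : MGraph) (KG : Set G.V) : Prop :=
  ∃ M : MinorModel H G, ∀ v ∈ KH, (M.bs v ∩ KG).Nonempty

/-- A signed minor model of `(H,γH)` in `(G,γG)`: after shifting, branch sets are
connected through even edges and edges of `H` get edges of `G` of the correct sign. -/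
structure SignedMinorModel (H G : MGraph) (γH : H.E → ZMod 2) (γG : G.E → ZMod 2) where
  γ' : G.E → ZMod 2
  shift : IsShift G γG γ'
  bs : H.V → Set G.V
  em : H.E → G.E
  bs_nonempty : ∀ v, (bs v).Nonempty
  bs_disjoint : ∀ u v, u ≠ v → Disjoint (bs u) (bs v)
  bs_connected : ∀ v, ∀ a ∈ bs v, ∀ b ∈ bs v,
    Relation.ReflTransGen
      (fun x y => x ∈ bs v ∧ y ∈ bs v ∧ ∃ e, γ' e = 0 ∧ G.ends e = s(x, y)) a b
  em_inj : Function.Injective em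
  em_ends : ∀ eH u v, H.ends eH = s(u, v) →
    ∃ a ∈ bs u, ∃ b ∈ bs v, G.ends (em eH) = s(a, b)
  em_parity : ∀ eH, γ' (em eH) = γH eH

/-- `(H,γH)` is a signed graph minor of `(G,γG)`. -/
def IsSignedMinor (H : MGraph) (γH : H.E → ZMod 2) (G : MGraph)
    (γG : G.E → ZMod 2) : Prop :=
  Nonempty (SignedMinorModel H G γH γG)

/-- `(H,γH,KH)` is a rooted signed graph minor of `(G,γG,KG)`. -/
def IsRootedSignedMinor (H : MGraph) (γH : H.E → ZMod 2) (KH : Set H.V)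
    (G : MGraph) (γG : G.E → ZMod 2) (KG : Set G.V) : Prop :=
  ∃ M : SignedMinorModel H G γH γG, ∀ v ∈ KH, (M.bs v ∩ KG).Nonempty

/-- An odd minor model of `H` in `G`: a minor model together with a 2-colouring of
`G` which is proper on each branch set (branch sets are connected through
bichromatic edges) and for which every model edge is monochromatic. -/
structure OddMinorModel (H G : MGraph) where
  bs : H.V → Set G.V
  em : H.E → G.E
  col : G.V → ZMod 2
  bs_nonempty : ∀ v, (bs v).Nonempty
  bs_disjoint : ∀ u v, u ≠ v → Disjoint (bs u) (bs v)
  bs_connected : ∀ v, ∀ a ∈ bs v, ∀ b ∈ bs v,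
    Relation.ReflTransGen
      (fun x y => x ∈ bs v ∧ y ∈ bs v ∧ col x ≠ col y ∧ ∃ e, G.ends e = s(x, y)) a b
  em_inj : Function.Injective em
  em_ends : ∀ eH u v, H.ends eH = s(u, v) →
    ∃ a ∈ bs u, ∃ b ∈ bs v, G.ends (em eH) = s(a, b)
  em_mono : ∀ eH u v, G.ends (em eH) = s(u, v) → col u = col v

/-- `G` contains `H` as an odd-minor. -/
def IsOddMinor (H G : MGraph) : Prop := Nonempty (OddMinorModel H G)

/-- `(G,γG)` contains `(H,γH)` as a subdivision. -/
def IsSignedSubdivision (H : MGraph) (γH : H.E → ZMod 2) (G : MGraph)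
    (γG : G.E → ZMod 2) : Prop :=
  ∃ (γH' : H.E → ZMod 2) (_ : IsShift H γH γH')
    (φV : H.V → G.V) (φE : H.E → G.Path),
    Function.Injective φV ∧
    (∀ eH u v, H.ends eH = s(u, v) →
      s((φE eH).first, (φE eH).last) = s(φV u, φV v)) ∧
    (∀ eH, (φE eH).parity γG = γH' eH) ∧
    (∀ e e', e ≠ e' → Disjoint ((φE e).internals) ((φE e').support)) ∧
    (∀ e, Disjoint ((φE e).internals) (Set.range φV))

/-! ## Tree decompositions and width parameters -/

/-- A tree decomposition of a multigraph. -/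
structure TreeDecomp (G : MGraph) where
  ι : Type
  tree : SimpleGraph ι
  isTree : tree.IsTree
  bag : ι → Set G.V
  covers_vertex : ∀ v, ∃ t, v ∈ bag t
  covers_edge : ∀ e, ∃ t, ∀ v ∈ G.ends e, v ∈ bag t
  bag_connected : ∀ v, (tree.induce {t | v ∈ bag t}).Connected

/-- A node of a tree is a leaf if it has at most one neighbour. -/
def IsLeaf {ι : Type} (T : SimpleGraph ι) (t : ι) : Prop :=
  (T.neighborSet t).Subsingleton

/-- A tree `K`-free-decomposition. -/
structure KFreeDecomp (G : MGraph) (K : Set G.V) extends TreeDecomp G where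
  L : Set G.V
  L_disj : Disjoint L K
  unique_bag : ∀ v ∈ L, ∃! t, v ∈ bag t
  leaf_bag : ∀ v ∈ L, ∀ t, v ∈ bag t → IsLeaf tree t

/-- The width of a tree `K`-free-decomposition: `max {0, max_t |β(t)\L| - 1}`. -/
noncomputable def KFreeDecomp.width {G : MGraph} {K : Set G.V}
    (D : KFreeDecomp G K) : ℕ :=
  ⨆ t : D.ι, ((D.bag t \ D.L).ncard - 1)

/-- The `K`-free treewidth of `(G,K)`. -/
noncomputable def twK (G : MGraph) (K : Set G.V) : ℕ :=
  sInf {w | ∃ D : KFreeDecomp G K, D.width = w}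

/-- A tame OCP-tree-decomposition of a signed graph. -/
structure TameOCPDecomp (G : MGraph) (γ : G.E → ZMod 2) extends TreeDecomp G where
  prot : ι → Set G.V
  prot_sub : ∀ t, prot t ⊆ bag t
  prot_adh : ∀ t t', tree.Adj t t' → ((bag t ∩ bag t') \ prot t).ncard ≤ 1

/-- The tame width (t-width) of a tame OCP-tree-decomposition. -/
noncomputable def TameOCPDecomp.twidth {G : MGraph} {γ : G.E → ZMod 2}
    (D : TameOCPDecomp G γ) : ℕ :=
  ⨆ t : D.ι, ((D.prot t).ncard + G.OCPOn γ (D.bag t \ D.prot t))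

/-- The tame OCP-treewidth of a signed graph. -/
noncomputable def tOCPtw (G : MGraph) (γ : G.E → ZMod 2) : ℕ :=
  sInf {w | ∃ D : TameOCPDecomp G γ, D.twidth = w}

/-- A TDM-tree-decomposition of a rooted signed graph. -/
structure TDMDecomp (G : MGraph) (γ : G.E → ZMod 2) (K : Set G.V)
    extends TreeDecomp G where
  prot : ι → Set G.V
  J : Set ι
  J_subtree : J.Nonempty → (tree.induce J).Connected
  prot_sub : ∀ t, prot t ⊆ bag t
  prot_roots : ∀ t, K ∩ bag t ⊆ prot t
  prot_adh : ∀ t t', tree.Adj t t' → ((bag t ∩ bag t') \ prot t).ncard ≤ 1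
  strong : ∀ t ∈ J, ∀ t', tree.Adj t t' → bag t ∩ bag t' ⊆ prot t
  roots_in_J : K ⊆ ⋃ j ∈ J, bag j

/-- The width of a TDM-tree-decomposition. -/
noncomputable def TDMDecomp.width {G : MGraph} {γ : G.E → ZMod 2} {K : Set G.V}
    (D : TDMDecomp G γ K) : ℕ :=
  ⨆ t : D.ι, ((D.prot t).ncard + G.OCPOn γ (D.bag t \ D.prot t))

/-- The TDM-treewidth of a rooted signed graph. -/
noncomputable def TDMtw (G : MGraph) (γ : G.E → ZMod 2) (K : Set G.V) : ℕ :=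
  sInf {w | ∃ D : TDMDecomp G γ K, D.width = w}

/-! ## Grids, parity handles, parity vortices -/

/-- Adjacency of the grid, on `ℕ × ℕ` coordinates. -/
def gridAdj (a b : ℕ × ℕ) : Prop :=
  (a.1 = b.1 ∧ (a.2 + 1 = b.2 ∨ b.2 + 1 = a.2)) ∨
  (a.2 = b.2 ∧ (a.1 + 1 = b.1 ∨ b.1 + 1 = a.1))

/-- The `k × k` grid. -/
def gridGraph (k : ℕ) : MGraph where
  V := Fin k × Fin k
  E := {e : Sym2 (Fin k × Fin k) //
    ∃ a b : Fin k × Fin k, gridAdj (a.1.1, a.2.1) (b.1.1, b.2.1) ∧ e = s(a, b)}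
  finV := inferInstance
  finE := inferInstance
  ends := Subtype.val
  loopless := fun e he => by
    obtain ⟨a, b, hab, h⟩ := e.2
    rw [h, Sym2.mk_isDiag_iff] at he
    subst he
    rcases hab with ⟨_, h' | h'⟩ | ⟨_, h' | h'⟩ <;> omega

/-- The first row of the `k × k` grid. -/
def firstRow (k : ℕ) : Set (gridGraph k).V := {p : Fin k × Fin k | p.1.1 = 0}

/-- The `i`-th designated vertex `x_i` on the outer face of the cylindrical
`(k × 4k)`-grid (every other vertex, `0`-indexed). -/
def xvtx (k : ℕ) (i : Fin (2 * k)) : Fin k × Fin (4 * k) :=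
  (⟨0, by have := i.2; omega⟩, ⟨2 * i.1, by have := i.2; omega⟩)

/-- Adjacency of the cylindrical `(k × 4k)`-grid `P_k □ C_{4k}`. -/
def cylAdj (k : ℕ) (a b : Fin k × Fin (4 * k)) : Prop :=
  (a.1 = b.1 ∧ (a.2.1 + 1 = b.2.1 ∨ b.2.1 + 1 = a.2.1 ∨
    (a.2.1 = 0 ∧ b.2.1 + 1 = 4 * k) ∨ (b.2.1 = 0 ∧ a.2.1 + 1 = 4 * k))) ∨
  (a.2 = b.2 ∧ (a.1.1 + 1 = b.1.1 ∨ b.1.1 + 1 = a.1.1))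

/-- The chords `x_i x_{2k-i+1}` of the parity handle. -/
def handleChord (k : ℕ) (e : Sym2 (Fin k × Fin (4 * k))) : Prop :=
  ∃ i : Fin k, e = s(xvtx k ⟨i.1, by have := i.2; omega⟩,
    xvtx k ⟨2 * k - 1 - i.1, by have := i.2; omega⟩)

/-- The chords `x_{2i-1} x_{2i}` of the parity vortex. -/
def vortexChord (k : ℕ) (e : Sym2 (Fin k × Fin (4 * k))) : Prop :=
  ∃ i : Fin k, e = s(xvtx k ⟨2 * i.1, by have := i.2; omega⟩,
    xvtx k ⟨2 * i.1 + 1, by have := i.2; omega⟩)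

lemma xvtx_ne (k : ℕ) (i j : Fin (2 * k)) (h : i.1 ≠ j.1) : xvtx k i ≠ xvtx k j := by
  intro hc
  have := congrArg (fun p => p.2.1) hc
  simp only [xvtx] at this
  omega

/-- The unsigned, unrooted parity handle `H_k`. -/
def handleGraph (k : ℕ) : MGraph where
  V := Fin k × Fin (4 * k)
  E := {e : Sym2 (Fin k × Fin (4 * k)) //
    (∃ a b, cylAdj k a b ∧ e = s(a, b)) ∨ handleChord k e}
  finV := inferInstance
  finE := inferInstance
  ends := Subtype.val
  loopless := fun e he => by
    rcases e.2 with ⟨a, b, hab, h⟩ | ⟨i, h⟩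
    · rw [h, Sym2.mk_isDiag_iff] at he
      subst he
      have h1 := a.1.2
      have h2 := a.2.2
      rcases hab with ⟨_, h' | h' | ⟨h', h''⟩ | ⟨h', h''⟩⟩ | ⟨_, h' | h'⟩ <;> omega
    · rw [h, Sym2.mk_isDiag_iff] at he
      have := i.2
      exact xvtx_ne k _ _ (show (i.1 : ℕ) ≠ 2 * k - 1 - i.1 by omega) he

/-- The unsigned, unrooted parity vortex `V_k`. -/
def vortexGraph (k : ℕ) : MGraph where
  V := Fin k × Fin (4 * k)
  E := {e : Sym2 (Fin k × Fin (4 * k)) //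
    (∃ a b, cylAdj k a b ∧ e = s(a, b)) ∨ vortexChord k e}
  finV := inferInstance
  finE := inferInstance
  ends := Subtype.val
  loopless := fun e he => by
    rcases e.2 with ⟨a, b, hab, h⟩ | ⟨i, h⟩
    · rw [h, Sym2.mk_isDiag_iff] at he
      subst he
      have h1 := a.1.2
      have h2 := a.2.2
      rcases hab with ⟨_, h' | h' | ⟨h', h''⟩ | ⟨h', h''⟩⟩ | ⟨_, h' | h'⟩ <;> omega
    · rw [h, Sym2.mk_isDiag_iff] at he
      have := i.2
      exact xvtx_ne k _ _ (show (2 * i.1 : ℕ) ≠ 2 * i.1 + 1 by omega) he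

/-- The all-zero signing. -/
def γ₀ (G : MGraph) : G.E → ZMod 2 := fun _ => 0

/-- The all-one signing. -/
def γ₁ (G : MGraph) : G.E → ZMod 2 := fun _ => 1

/-! ## Matrices with two nonzero entries per row -/

/-- `A` has exactly two nonzero entries in every row. -/
def TwoNonzeroPerRow {m n : ℕ} (A : Matrix (Fin m) (Fin n) ℤ) : Prop :=
  ∀ i, {j | A i j ≠ 0}.ncard = 2

/-- The graph `G(A)` of a matrix with exactly two nonzero entries per row:
vertices are columns, edges are rows, each row joining its two nonzero columns. -/
noncomputable def matrixGraph {m n : ℕ} (A : Matrix (Fin m) (Fin n) ℤ)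
    (h : TwoNonzeroPerRow A) : MGraph where
  V := Fin n
  E := Fin m
  finV := inferInstance
  finE := inferInstance
  ends := fun i => s((Set.ncard_eq_two.mp (h i)).choose,
    (Set.ncard_eq_two.mp (h i)).choose_spec.choose)
  loopless := fun i hi => by
    rw [Sym2.mk_isDiag_iff] at hi
    exact (Set.ncard_eq_two.mp (h i)).choose_spec.choose_spec.1 hi

/-- The signing of `G(A)`: a row is even iff its two nonzero entries have
different signs (i.e. the product of its nonzero entries is negative). -/
def matrixSign {m n : ℕ} (A : Matrix (Fin m) (Fin n) ℤ) : Fin m → ZMod 2 :=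
  fun i => if (∏ j ∈ Finset.univ.filter (fun j => A i j ≠ 0), A i j) < 0 then 0 else 1

/-- The roots of `G⁺_•(A)`: columns containing an entry outside `{-1,0,1}`. -/
def matrixRoots {m n : ℕ} (A : Matrix (Fin m) (Fin n) ℤ) : Set (Fin n) :=
  {j | ∃ i, 1 < (A i j).natAbs}

/-- The TDM-treewidth of the rooted signed graph `G⁺_•(A)` associated to `A`. -/
noncomputable def matrixTDMtw {m n : ℕ} (A : Matrix (Fin m) (Fin n) ℤ)
    (h : TwoNonzeroPerRow A) : ℕ :=
  TDMtw (matrixGraph A h) (fun e => matrixSign A e) (fun j => matrixRoots A j)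

/-- The largest absolute value of an entry of `A`. -/
def maxAbsEntry {m n : ℕ} (A : Matrix (Fin m) (Fin n) ℤ) : ℕ :=
  Finset.sup Finset.univ fun i => Finset.sup Finset.univ fun j => (A i j).natAbs

/-- `A` is totally `Δ`-modular: every square subdeterminant has absolute value at
most `Δ`. -/
def TotallyDeltaModular {m n : ℕ} (A : Matrix (Fin m) (Fin n) ℤ) (Δ : ℕ) : Prop :=
  ∀ (s : ℕ) (r : Fin s → Fin m) (c : Fin s → Fin n),
    Function.Injective r → Function.Injective c →
    ((A.submatrix r c).det).natAbs ≤ Δ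

/-- The set of objective values of feasible points of the integer program
`max { wᵀx : Ax ≤ b, ℓ ≤ x ≤ u, x integral }`. -/
def IPvalues {m n : ℕ} (A : Matrix (Fin m) (Fin n) ℤ) (b : Fin m → ℤ)
    (w ℓ u : Fin n → ℤ) : Set ℤ :=
  {y | ∃ x : Fin n → ℤ, (∀ i, ∑ j, A i j * x j ≤ b i) ∧
    (∀ j, ℓ j ≤ x j ∧ x j ≤ u j) ∧ y = ∑ j, w j * x j}

/-- `o` solves the maximization problem over `S`: it is `none` iff `S` is
infeasible, and otherwise it is the maximum value. -/
def SolvesIP (o : Option ℤ) (S : Set ℤ) : Prop :=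
  (o = none ∧ S = ∅) ∨ ∃ y, o = some y ∧ IsGreatest S y


lemma exists_pair {α : Type} (z : Sym2 α) : ∃ p : α × α, z = s(p.1, p.2) :=
  Sym2.ind (fun a b => ⟨(a, b), rfl⟩) z

/-- A chosen first endpoint of an edge. -/
noncomputable def MGraph.ep1 (G : MGraph) (e : G.E) : G.V :=
  (exists_pair (G.ends e)).choose.1

/-- A chosen second endpoint of an edge. -/
noncomputable def MGraph.ep2 (G : MGraph) (e : G.E) : G.V :=
  (exists_pair (G.ends e)).choose.2

lemma MGraph.ends_ep (G : MGraph) (e : G.E) : G.ends e = s(G.ep1 e, G.ep2 e) :=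
  (exists_pair (G.ends e)).choose_spec

lemma map_inl_not_isDiag {α β : Type} (z : Sym2 α) (hz : ¬ z.IsDiag) :
    ¬ (z.map (Sum.inl : α → α ⊕ β)).IsDiag := by
  induction z using Sym2.ind with
  | _ a b =>
    simp only [Sym2.map_pair_eq, Sym2.mk_isDiag_iff] at *
    exact fun h => hz (by injection h)

/-- The graph obtained from `(G,γ)` by subdividing every even edge exactly once. -/
noncomputable def subdivideEven (G : MGraph) (γ : G.E → ZMod 2) : MGraph where
  V := G.V ⊕ {e : G.E // γ e = 0}
  E := {e : G.E // γ e ≠ 0} ⊕ ({e : G.E // γ e = 0} × Bool)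
  finV := inferInstance
  finE := inferInstance
  ends := fun x =>
    match x with
    | .inl e => (G.ends e.1).map .inl
    | .inr (e, b) => s(.inr e, .inl (if b then G.ep1 e.1 else G.ep2 e.1))
  loopless := fun x => by
    match x with
    | .inl e => exact map_inl_not_isDiag _ (G.loopless e.1)
    | .inr (e, b) =>
      rw [Sym2.mk_isDiag_iff]
      simp

/-- Minimum degree at least `d` (each vertex is incident to at least `d` edges). -/
def minDegreeGE (G : MGraph) (d : ℕ) : Prop :=
  ∀ v : G.V, d ≤ {e : G.E | v ∈ G.ends e}.ncard

/-- The `j`-th vertex of the subdividing path: `u`, then `ℓ` new internal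
vertices, then `v`. -/
def pathVert {α : Type} (u v : α) (ℓ : ℕ) (j : Fin (ℓ + 2)) : α ⊕ Fin ℓ :=
  if h0 : j.1 = 0 then .inl u
  else if h1 : j.1 = ℓ + 1 then .inl v
  else .inr ⟨j.1 - 1, by have := j.2; omega⟩

/-- The graph obtained from `G` by replacing the edge `e₀` (with ends `u,v`) by a
path with `ℓ` internal vertices (hence `ℓ + 1` edges). -/
def replaceEdge (G : MGraph) (e₀ : G.E) (u v : G.V) (h : G.ends e₀ = s(u, v))
    (ℓ : ℕ) : MGraph where
  V := G.V ⊕ Fin ℓ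
  E := {e : G.E // e ≠ e₀} ⊕ Fin (ℓ + 1)
  finV := inferInstance
  finE := inferInstance
  ends := fun x =>
    match x with
    | .inl e => (G.ends e.1).map .inl
    | .inr i => s(pathVert u v ℓ ⟨i.1, by have := i.2; omega⟩,
        pathVert u v ℓ ⟨i.1 + 1, by have := i.2; omega⟩)
  loopless := fun x => by
    match x with
    | .inl e => exact map_inl_not_isDiag _ (G.loopless e.1)
    | .inr i =>
      rw [Sym2.mk_isDiag_iff]
      have huv : u ≠ v := by
        intro hc
        exact G.loopless e₀ (by rw [h, hc]; simp)
      have hi := i.2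
      simp only [pathVert]
      split_ifs <;> (simp_all; try omega)

/-- The signing of `replaceEdge`: old edges keep their sign, the `i`-th path edge
gets sign `δ i`. -/
def replaceGamma {G : MGraph} {e₀ : G.E} {u v : G.V} {h : G.ends e₀ = s(u, v)}
    {ℓ : ℕ} (γ : G.E → ZMod 2) (δ : Fin (ℓ + 1) → ZMod 2) :
    (replaceEdge G e₀ u v h ℓ).E → ZMod 2 :=
  fun x => match x with
  | .inl e => γ e.1
  | .inr i => δ i



/-! Pull a `K`-free decomposition of `G` back to `H` along the minor model, on the same tree:
a vertex of `H` enters every bag its branch set meets, and is free when its whole branch set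
is free. A free vertex of `G` lies in a single leaf bag, which also contains all its neighbours;
so a connected branch set that meets a bag only in free vertices lies inside that bag and is
entirely free. Hence every non-free vertex of `H` in a bag is witnessed by a non-free vertex of
`G` in the same bag, injectively since branch sets are disjoint. Roots of `H` are not free
because their branch sets contain roots of `G`. -/

namespace MGraph

def Adj (G : MGraph) (x y : G.V) : Prop := ∃ e, G.ends e = s(x, y)

def PreconnectedOn (G : MGraph) (S : Set G.V) : Prop :=
  ∀ a ∈ S, ∀ b ∈ S, Relation.ReflTransGen (fun x y => x ∈ S ∧ y ∈ S ∧ G.Adj x y) a b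

end MGraph

namespace TreeDecomp

variable {G : MGraph} (D : TreeDecomp G)

lemma exists_bag_of_adj {x y : G.V} (hxy : G.Adj x y) : ∃ t, x ∈ D.bag t ∧ y ∈ D.bag t := by
  obtain ⟨e, he⟩ := hxy
  obtain ⟨t, ht⟩ := D.covers_edge e
  exact ⟨t, ht x (he ▸ Sym2.mem_mk_left x y), ht y (he ▸ Sym2.mem_mk_right x y)⟩

lemma reachable_of_mem_bag {U : Set D.ι} {x : G.V} (hU : {t | x ∈ D.bag t} ⊆ U)
    {t t' : D.ι} (ht : x ∈ D.bag t) (ht' : x ∈ D.bag t') :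
    (D.tree.induce U).Reachable ⟨t, hU ht⟩ ⟨t', hU ht'⟩ :=
  ((D.bag_connected x).preconnected ⟨t, ht⟩ ⟨t', ht'⟩).map (D.tree.induceHomOfLE hU).toHom

lemma connected_induce_bags_meeting {S : Set G.V} (hne : S.Nonempty) (hS : G.PreconnectedOn S) :
    (D.tree.induce {t | (S ∩ D.bag t).Nonempty}).Connected := by
  set U := {t | (S ∩ D.bag t).Nonempty}
  have hsub : ∀ x ∈ S, {t | x ∈ D.bag t} ⊆ U := fun x hx t ht => ⟨x, hx, ht⟩
  obtain ⟨x, hx⟩ := hne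
  obtain ⟨t, ht⟩ := D.covers_vertex x
  have : Nonempty U := ⟨⟨t, x, hx, ht⟩⟩
  refine SimpleGraph.Connected.mk fun ⟨t₁, x₁, hx₁, hxt₁⟩ ⟨t₂, x₂, hx₂, hxt₂⟩ => ?_
  suffices ∀ z, Relation.ReflTransGen (fun x y => x ∈ S ∧ y ∈ S ∧ G.Adj x y) x₁ z →
      ∀ t (hz : z ∈ D.bag t) (hzS : z ∈ S),
        (D.tree.induce U).Reachable ⟨t₁, x₁, hx₁, hxt₁⟩ ⟨t, z, hzS, hz⟩ from
    this x₂ (hS x₁ hx₁ x₂ hx₂) t₂ hxt₂ hx₂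
  intro z hz
  induction hz with
  | refl => exact fun t ht _ => D.reachable_of_mem_bag (hsub x₁ hx₁) hxt₁ ht
  | tail _ step ih =>
    obtain ⟨hbS, hcS, hbc⟩ := step
    obtain ⟨t₀, hbt₀, hct₀⟩ := D.exists_bag_of_adj hbc
    exact fun t hct _ => (ih t₀ hbt₀ hbS).trans (D.reachable_of_mem_bag (hsub _ hcS) hct₀ hct)

end TreeDecomp

namespace KFreeDecomp

variable {G : MGraph} {K : Set G.V} (D : KFreeDecomp G K)

lemma eq_of_mem_L {x : G.V} (hx : x ∈ D.L) {t t' : D.ι} (ht : x ∈ D.bag t)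
    (ht' : x ∈ D.bag t') : t = t' :=
  (D.unique_bag x hx).unique ht ht'

lemma mem_bag_of_adj_of_mem_L {x y : G.V} (hx : x ∈ D.L) {t : D.ι} (ht : x ∈ D.bag t)
    (hxy : G.Adj x y) : y ∈ D.bag t := by
  obtain ⟨t₀, hxt₀, hyt₀⟩ := D.exists_bag_of_adj hxy
  exact D.eq_of_mem_L hx hxt₀ ht ▸ hyt₀

lemma subset_bag_of_inter_bag_subset_L {S : Set G.V} (hS : G.PreconnectedOn S) {t : D.ι}
    (hmeet : (S ∩ D.bag t).Nonempty) (hL : S ∩ D.bag t ⊆ D.L) : S ⊆ D.bag t := by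
  obtain ⟨x, hxS, hxt⟩ := hmeet
  intro z hzS
  induction hS x hxS z hzS with
  | refl => exact hxt
  | tail _ step ih =>
    obtain ⟨hbS, -, hbc⟩ := step
    exact D.mem_bag_of_adj_of_mem_L (hL ⟨hbS, ih hbS⟩) (ih hbS) hbc

end KFreeDecomp

open Function in
lemma ncard_le_ncard_of_pairwise_disjoint {α β : Type*} [Finite β] {F : α → Set β}
    (hF : Pairwise (Disjoint on F)) {A : Set α} {B : Set β} (hA : ∀ v ∈ A, (F v ∩ B).Nonempty) :
    A.ncard ≤ B.ncard := by
  choose f hfF hfB using hA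
  rw [← Nat.card_coe_set_eq, ← Nat.card_coe_set_eq]
  refine Nat.card_le_card_of_injective (fun v => ⟨f v v.2, hfB v v.2⟩) fun v w hvw => ?_
  by_contra hne
  refine Set.disjoint_left.mp (hF fun h => hne (Subtype.ext h)) (hfF v v.2) ?_
  have hfvw : f v v.2 = f w w.2 := congrArg Subtype.val hvw
  exact hfvw ▸ hfF w w.2

namespace TreeDecomp

variable {H G : MGraph}

def comapMinor (D : TreeDecomp G) (M : MinorModel H G) : TreeDecomp H where
  ι := D.ι
  tree := D.tree
  isTree := D.isTree
  bag t := {v | (M.bs v ∩ D.bag t).Nonempty}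
  covers_vertex v := by
    obtain ⟨x, hx⟩ := M.bs_nonempty v
    obtain ⟨t, ht⟩ := D.covers_vertex x
    exact ⟨t, x, hx, ht⟩
  covers_edge e := by
    obtain ⟨a, ha, b, hb, hab⟩ := M.em_ends e (H.ep1 e) (H.ep2 e) (H.ends_ep e)
    obtain ⟨t, hat, hbt⟩ := D.exists_bag_of_adj ⟨M.em e, hab⟩
    refine ⟨t, fun w hw => ?_⟩
    rcases Sym2.mem_iff.mp (H.ends_ep e ▸ hw) with rfl | rfl
    exacts [⟨a, ha, hat⟩, ⟨b, hb, hbt⟩]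
  bag_connected v := D.connected_induce_bags_meeting (M.bs_nonempty v) (M.bs_connected v)

end TreeDecomp

namespace KFreeDecomp

variable {H G : MGraph} {KH : Set H.V} {KG : Set G.V}

def comapRootedMinor (D : KFreeDecomp G KG) (M : MinorModel H G)
    (hM : ∀ v ∈ KH, (M.bs v ∩ KG).Nonempty) : KFreeDecomp H KH where
  toTreeDecomp := D.toTreeDecomp.comapMinor M
  L := {v | M.bs v ⊆ D.L}
  L_disj := Set.disjoint_left.mpr fun v hv hvK => by
    obtain ⟨x, hxv, hxK⟩ := hM v hvK
    exact Set.disjoint_left.mp D.L_disj (hv hxv) hxK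
  unique_bag v hv := by
    obtain ⟨x, hx⟩ := M.bs_nonempty v
    obtain ⟨t, ht⟩ := D.covers_vertex x
    have hsub : M.bs v ⊆ D.bag t :=
      D.subset_bag_of_inter_bag_subset_L (M.bs_connected v) ⟨x, hx, ht⟩ fun y hy => hv hy.1
    refine ⟨t, ⟨x, hx, ht⟩, fun t' ⟨y, hyv, hyt'⟩ => D.eq_of_mem_L (hv hyv) hyt' (hsub hyv)⟩
  leaf_bag v hv t := fun ⟨y, hyv, hyt⟩ => D.leaf_bag y (hv hyv) t hyt

lemma width_comapRootedMinor_le (D : KFreeDecomp G KG) (M : MinorModel H G)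
    (hM : ∀ v ∈ KH, (M.bs v ∩ KG).Nonempty) : (D.comapRootedMinor M hM).width ≤ D.width := by
  have hbdd : BddAbove (Set.range fun t => (D.bag t \ D.L).ncard - 1) :=
    ⟨Nat.card G.V, by rintro _ ⟨t, rfl⟩; exact (Nat.sub_le _ _).trans (Set.ncard_le_card _)⟩
  refine ciSup_mono hbdd fun t => Nat.sub_le_sub_right ?_ 1
  refine ncard_le_ncard_of_pairwise_disjoint (fun u v huv => M.bs_disjoint u v huv) ?_
  rintro v ⟨hvt, hvL⟩
  by_contra hnone
  have hsub : M.bs v ∩ D.bag t ⊆ D.L := fun y hy => by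
    by_contra hyL
    exact hnone ⟨y, hy.1, hy.2, hyL⟩
  have hbag := D.subset_bag_of_inter_bag_subset_L (M.bs_connected v) hvt hsub
  exact hvL fun y hy => hsub ⟨hy, hbag hy⟩

def singleBag (G : MGraph) (K : Set G.V) : KFreeDecomp G K where
  ι := PUnit
  tree := ⊥
  isTree := ⟨.of_subsingleton, SimpleGraph.isAcyclic_bot⟩
  bag _ := Set.univ
  covers_vertex _ := ⟨PUnit.unit, Set.mem_univ _⟩
  covers_edge _ := ⟨PUnit.unit, fun _ _ => Set.mem_univ _⟩
  bag_connected v := by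
    have : Nonempty {t : PUnit | v ∈ (Set.univ : Set G.V)} := ⟨⟨PUnit.unit, Set.mem_univ v⟩⟩
    exact .of_subsingleton
  L := ∅
  L_disj := Set.empty_disjoint _
  unique_bag _ h := h.elim
  leaf_bag _ h := h.elim

end KFreeDecomp

lemma twK_le_width {G : MGraph} {K : Set G.V} (D : KFreeDecomp G K) : twK G K ≤ D.width :=
  Nat.sInf_le ⟨D, rfl⟩

lemma exists_width_eq_twK (G : MGraph) (K : Set G.V) : ∃ D : KFreeDecomp G K, D.width = twK G K :=
  Nat.sInf_mem (s := {w | ∃ D : KFreeDecomp G K, D.width = w}) ⟨_, KFreeDecomp.singleBag G K, rfl⟩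

/-- `K`-free treewidth is monotone under rooted minors. -/
theorem statement_9 (H : MGraph) (KH : Set H.V) (G : MGraph) (KG : Set G.V)
    (h : IsRootedMinor H KH G KG) : twK H KH ≤ twK G KG := by
  obtain ⟨M, hM⟩ := h
  obtain ⟨D, hD⟩ := exists_width_eq_twK G KG
  calc twK H KH ≤ (D.comapRootedMinor M hM).width := twK_le_width _
    _ ≤ D.width := D.width_comapRootedMinor_le M hM
    _ = twK G KG := hD

end TDMPaper
end

section
/- If the rooted graph (G,K) contains (W_{3k+1}, K_{W_{3k+1}}) — the (3k+1)×(3k+1) grid rooted at its first row — as a rooted minor, then the K-free treewidth satisfies tw_K(G,K) ≥ k. -/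
namespace SimpleGraph

variable {V : Type*} {G : SimpleGraph V}

namespace Walk

lemma IsPath.append_of_forall_mem_support {u v w : V} {p : G.Walk u v} {q : G.Walk v w}
    (hp : p.IsPath) (hq : q.IsPath) (hpq : ∀ x ∈ p.support, x ∈ q.support → x = v) :
    (p.append q).IsPath := by
  rw [isPath_def, support_append, List.nodup_append]
  refine ⟨hp.support_nodup, hq.support_nodup.sublist q.support.tail_sublist, ?_⟩
  rintro x hxp _ hxq rfl
  have hq' := hq.support_nodup
  rw [← cons_tail_support] at hq'
  exact (List.nodup_cons.mp hq').1 (hpq x hxp (List.mem_of_mem_tail hxq) ▸ hxq)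

lemma IsPath.exists_prefix_first_mem {u v : V} {p : G.Walk u v} (hp : p.IsPath) {S : Set V}
    (hv : v ∈ S) : ∃ m ∈ S, ∃ q : G.Walk u m,
      q.IsPath ∧ q.support ⊆ p.support ∧ ∀ x ∈ q.support, x ∈ S → x = m := by
  induction p with
  | nil => exact ⟨_, hv, Walk.nil, .nil, by simp, by simp⟩
  | @cons u w v h p ih =>
    by_cases hu : u ∈ S
    · exact ⟨u, hu, Walk.nil, .nil, by simp, by simp⟩
    obtain ⟨hp, hup⟩ := (cons_isPath_iff h p).mp hp
    obtain ⟨m, hm, q, hq, hqp, hqS⟩ := ih hp hv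
    refine ⟨m, hm, cons h q, (cons_isPath_iff h q).mpr ⟨hq, fun hu' => hup (hqp hu')⟩,
      by simpa using List.subset_cons_of_subset _ hqp, ?_⟩
    rintro x hx hxS
    rcases List.mem_cons.mp (by simpa using hx) with rfl | hx
    exacts [absurd hxS hu, hqS x hx hxS]

end Walk

lemma Preconnected.exists_isPath_of_induce {A : Set V} (hA : (G.induce A).Preconnected)
    {x y : V} (hx : x ∈ A) (hy : y ∈ A) :
    ∃ p : G.Walk x y, p.IsPath ∧ ∀ z ∈ p.support, z ∈ A := by
  classical
  obtain ⟨w⟩ := hA ⟨x, hx⟩ ⟨y, hy⟩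
  let q := w.map (Embedding.induce A).toHom
  refine ⟨q.bypass, q.bypass_isPath, fun z hz => ?_⟩
  obtain ⟨z', -, rfl⟩ :=
    List.mem_map.mp (Walk.support_map _ _ ▸ q.support_bypass_subset_support hz)
  exact z'.2

namespace IsAcyclic

variable {A B C : Set V}

lemma mem_of_mem_support_of_preconnected (hG : G.IsAcyclic) (hA : (G.induce A).Preconnected)
    {x y : V} (hx : x ∈ A) (hy : y ∈ A) {p : G.Walk x y} (hp : p.IsPath) :
    ∀ z ∈ p.support, z ∈ A := by
  obtain ⟨q, hq, hqA⟩ := hA.exists_isPath_of_induce hx hy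
  obtain rfl : p = q :=
    congrArg Subtype.val ((hG.subsingleton_path x y).elim ⟨p, hp⟩ ⟨q, hq⟩)
  exact hqA

lemma preconnected_induce_inter (hG : G.IsAcyclic) (hA : (G.induce A).Preconnected)
    (hB : (G.induce B).Preconnected) : (G.induce (A ∩ B)).Preconnected := by
  rintro ⟨x, hxA, hxB⟩ ⟨y, hyA, hyB⟩
  obtain ⟨p, hp, hpA⟩ := hA.exists_isPath_of_induce hxA hyA
  exact ⟨p.induce (A ∩ B) fun z hz =>
    ⟨hpA z hz, hG.mem_of_mem_support_of_preconnected hB hxB hyB hp z hz⟩⟩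

lemma inter_inter_nonempty (hG : G.IsAcyclic) (hA : (G.induce A).Preconnected)
    (hB : (G.induce B).Preconnected) (hC : (G.induce C).Preconnected)
    (hAB : (A ∩ B).Nonempty) (hAC : (A ∩ C).Nonempty) (hBC : (B ∩ C).Nonempty) :
    (A ∩ B ∩ C).Nonempty := by
  obtain ⟨a, haB, haC⟩ := hBC
  obtain ⟨b, hbA, hbC⟩ := hAC
  obtain ⟨c, hcA, hcB⟩ := hAB
  obtain ⟨p, hp, hpA⟩ := hA.exists_isPath_of_induce hcA hbA
  obtain ⟨m, hmC, p₁, hp₁, hp₁p, hp₁C⟩ := hp.exists_prefix_first_mem hbC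
  obtain ⟨q, hq, hqC⟩ := hC.exists_isPath_of_induce hmC haC
  -- `p₁` meets `C` only at `m`, so `p₁ ++ q` is the path from `c` to `a`, which lies in `B`.
  have hp₁q : (p₁.append q).IsPath :=
    hp₁.append_of_forall_mem_support hq fun x hx hxq => hp₁C x hx (hqC x hxq)
  refine ⟨m, ⟨hpA m (hp₁p p₁.end_mem_support), ?_⟩, hmC⟩
  exact hG.mem_of_mem_support_of_preconnected hB hcB haB hp₁q m
    ((Walk.mem_support_append_iff p₁ q).mpr (Or.inl p₁.end_mem_support))

theorem exists_forall_mem_of_pairwise_inter_nonempty (hG : G.IsAcyclic) :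
    ∀ {n : ℕ} (S : Fin (n + 1) → Set V), (∀ i, (G.induce (S i)).Preconnected) →
      (∀ i j, (S i ∩ S j).Nonempty) → ∃ v, ∀ i, v ∈ S i
  | 0, S, _, hS => by
    obtain ⟨v, hv, -⟩ := hS 0 0
    exact ⟨v, fun i => Fin.fin_one_eq_zero i ▸ hv⟩
  | n + 1, S, hconn, hS => by
    obtain ⟨v, hv⟩ := exists_forall_mem_of_pairwise_inter_nonempty hG
      (fun i : Fin (n + 1) => S i.castSucc ∩ S (Fin.last _))
      (fun i => hG.preconnected_induce_inter (hconn _) (hconn _)) fun i j => by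
        obtain ⟨v, ⟨hi, hj⟩, hl⟩ := hG.inter_inter_nonempty (hconn i.castSucc)
          (hconn j.castSucc) (hconn (Fin.last _)) (hS _ _) (hS _ _) (hS _ _)
        exact ⟨v, ⟨hi, hl⟩, hj, hl⟩
    exact ⟨v, Fin.lastCases (motive := fun i => v ∈ S i) (hv 0).2 fun i => (hv i).1⟩

end IsAcyclic

end SimpleGraph

lemma Fin.val_orderSucc_of_lt {n : ℕ} {i j : Fin n} (h : i < j) :
    (Order.succ i).val = i.val + 1 :=
  (Nat.covBy_iff_add_one_eq.mp
    (Fin.covBy_iff.mp (Order.covBy_succ_of_not_isMax (not_isMax_of_lt h)))).symm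

namespace TDMPaper

open MGraph

namespace MGraph

variable (G : MGraph)

def AdjIn (S : Set G.V) (x y : G.V) : Prop :=
  x ∈ S ∧ y ∈ S ∧ ∃ e, G.ends e = s(x, y)

def IsPreconnectedSet (S : Set G.V) : Prop :=
  ∀ a ∈ S, ∀ b ∈ S, Relation.ReflTransGen (G.AdjIn S) a b

variable {G}

lemma AdjIn.mono {S S' : Set G.V} (h : S ⊆ S') {x y : G.V} (hxy : G.AdjIn S x y) :
    G.AdjIn S' x y :=
  ⟨h hxy.1, h hxy.2.1, hxy.2.2⟩

end MGraph

namespace MinorModel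

variable {H G : MGraph} (M : MinorModel H G)

def branchUnion (U : Set H.V) : Set G.V := ⋃ u ∈ U, M.bs u

lemma bs_subset_branchUnion {U : Set H.V} {u : H.V} (hu : u ∈ U) : M.bs u ⊆ M.branchUnion U :=
  Set.subset_biUnion_of_mem (u := M.bs) hu

lemma mem_of_mem_bs_of_mem_branchUnion {U : Set H.V} {u : H.V} {x : G.V} (hxu : x ∈ M.bs u)
    (hx : x ∈ M.branchUnion U) : u ∈ U := by
  obtain ⟨v, hv, hxv⟩ := Set.mem_iUnion₂.mp hx
  obtain rfl : u = v := by_contra fun huv => Set.disjoint_left.mp (M.bs_disjoint u v huv) hxu hxv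
  exact hv

lemma isPreconnectedSet_branchUnion {U : Set H.V} (hU : H.IsPreconnectedSet U) :
    G.IsPreconnectedSet (M.branchUnion U) := by
  have inside : ∀ {u}, u ∈ U → ∀ {a b}, a ∈ M.bs u → b ∈ M.bs u →
      Relation.ReflTransGen (G.AdjIn (M.branchUnion U)) a b := fun {u} hu {a b} ha hb =>
    .mono (fun _ _ => AdjIn.mono (M.bs_subset_branchUnion hu)) _ _ (M.bs_connected _ a ha b hb)
  intro a ha' b hb'
  obtain ⟨u, hu, ha⟩ := Set.mem_iUnion₂.mp ha'
  obtain ⟨v, hv, hb⟩ := Set.mem_iUnion₂.mp hb'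
  clear ha' hb'
  induction hU u hu v hv using Relation.ReflTransGen.head_induction_on generalizing a with
  | refl => exact inside hv ha hb
  | head huw _ ih =>
    obtain ⟨hu, hw, eH, heH⟩ := huw
    obtain ⟨a', ha', b', hb', he⟩ := M.em_ends eH _ _ heH
    exact (inside hu ha ha').trans <| .head
      ⟨M.bs_subset_branchUnion hu ha', M.bs_subset_branchUnion hw hb', _, he⟩ (ih b' hw hb')

end MinorModel

def gridCross (N : ℕ) (i : Fin N) : Set (gridGraph N).V := {u | u.1 = i ∨ u.2 = i}

lemma reflTransGen_adjIn_gridLine {N : ℕ} {S : Set (gridGraph N).V} (f : Fin N → Fin N × Fin N)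
    (hfS : ∀ j, f j ∈ S)
    (hf : ∀ j j' : Fin N, j.1 + 1 = j'.1 →
      gridAdj ((f j).1.1, (f j).2.1) ((f j').1.1, (f j').2.1) ∧
        gridAdj ((f j').1.1, (f j').2.1) ((f j).1.1, (f j).2.1))
    (a b : Fin N) : Relation.ReflTransGen ((gridGraph N).AdjIn S) (f a) (f b) := by
  have adj : ∀ {u v}, gridAdj (u.1.1, u.2.1) (v.1.1, v.2.1) → u ∈ S → v ∈ S →
      (gridGraph N).AdjIn S u v := fun h hu hv => ⟨hu, hv, ⟨s(_, _), _, _, h, rfl⟩, rfl⟩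
  refine .lift f (fun _ _ h => h) _ _ <|
    reflTransGen_of_succ (fun j j' => (gridGraph N).AdjIn S (f j) (f j'))
    (fun j hj => adj (hf _ _ (Fin.val_orderSucc_of_lt hj.2).symm).1 (hfS _) (hfS _))
    (fun j hj => adj (hf _ _ (Fin.val_orderSucc_of_lt hj.2).symm).2 (hfS _) (hfS _))

lemma isPreconnectedSet_gridCross {N : ℕ} (i : Fin N) :
    (gridGraph N).IsPreconnectedSet (gridCross N i) := by
  have row := reflTransGen_adjIn_gridLine (S := gridCross N i) (fun j => (i, j))
    (fun _ => Or.inl rfl) fun _ _ h => ⟨.inl ⟨rfl, .inl h⟩, .inl ⟨rfl, .inr h⟩⟩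
  have col := reflTransGen_adjIn_gridLine (S := gridCross N i) (fun j => (j, i))
    (fun _ => Or.inr rfl) fun _ _ h => ⟨.inr ⟨rfl, .inl h⟩, .inr ⟨rfl, .inr h⟩⟩
  have center : ∀ u ∈ gridCross N i,
      Relation.ReflTransGen ((gridGraph N).AdjIn (gridCross N i)) u (i, i) ∧
      Relation.ReflTransGen ((gridGraph N).AdjIn (gridCross N i)) (i, i) u := by
    rintro ⟨a, b⟩ (rfl | rfl)
    exacts [⟨row b a, row a b⟩, ⟨col a b, col b a⟩]
  exact fun u hu v hv => (center u hu).1.trans (center v hv).2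

namespace MinorModel

variable {N : ℕ} {G : MGraph} (M : MinorModel (gridGraph N) G)

lemma le_two_mul_ncard_of_forall_mem_cross (f : Fin N → G.V)
    (hf : ∀ i, f i ∈ M.branchUnion (gridCross N i)) {B : Set G.V} (hB : ∀ i, f i ∈ B) :
    N ≤ 2 * B.ncard := by
  classical
  -- A vertex in the branch set of `u` lies only in the crosses `u.1` and `u.2`.
  have fiber : ∀ x ∈ Finset.univ.image f, (Finset.univ.filter (f · = x)).card ≤ 2 := by
    intro x hx
    obtain ⟨i, -, rfl⟩ := Finset.mem_image.mp hx
    obtain ⟨u, -, hu⟩ := Set.mem_iUnion₂.mp (hf i)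
    refine (Finset.card_le_card fun j hj => ?_).trans (Finset.card_le_two (a := u.1) (b := u.2))
    have := M.mem_of_mem_bs_of_mem_branchUnion hu ((Finset.mem_filter.mp hj).2 ▸ hf j)
    rcases this with h | h <;> simp [h]
  calc N = (Finset.univ : Finset (Fin N)).card := (Finset.card_fin N).symm
    _ ≤ 2 * (Finset.univ.image f).card := Finset.card_le_mul_card_image _ 2 fiber
    _ ≤ 2 * B.ncard := by
      rw [← Set.ncard_coe_finset]
      gcongr
      · exact B.toFinite
      · intro x hx
        obtain ⟨i, -, rfl⟩ := Finset.mem_image.mp hx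
        exact hB i

end MinorModel

namespace TreeDecomp

variable {G : MGraph} (D : TreeDecomp G)

def nodesMeeting (S : Set G.V) : Set D.ι := {t | ∃ v ∈ S, v ∈ D.bag t}

lemma nodesMeeting_inter_nonempty {S S' : Set G.V} (h : (S ∩ S').Nonempty) :
    (D.nodesMeeting S ∩ D.nodesMeeting S').Nonempty := by
  obtain ⟨v, hv, hv'⟩ := h
  obtain ⟨t, ht⟩ := D.covers_vertex v
  exact ⟨t, ⟨v, hv, ht⟩, v, hv', ht⟩

lemma preconnected_induce_nodesMeeting {S : Set G.V} (hS : G.IsPreconnectedSet S) :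
    (D.tree.induce (D.nodesMeeting S)).Preconnected := by
  have viaVertex : ∀ {v}, v ∈ S → ∀ {p q} (hp : p ∈ D.nodesMeeting S)
      (hq : q ∈ D.nodesMeeting S), v ∈ D.bag p → v ∈ D.bag q →
      (D.tree.induce (D.nodesMeeting S)).Reachable ⟨p, hp⟩ ⟨q, hq⟩ :=
    fun {v} hv {p q} _ _ hvp hvq => (D.bag_connected v ⟨p, hvp⟩ ⟨q, hvq⟩).map
      (SimpleGraph.induceHomOfLE _ fun t ht =>
        show t ∈ D.nodesMeeting S from ⟨v, hv, ht⟩).toHom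
  rintro ⟨p, a, ha, hap⟩ ⟨q, hq⟩
  obtain ⟨b, hb, hbq⟩ := id hq
  induction hS a ha b hb using Relation.ReflTransGen.head_induction_on generalizing p with
  | refl => exact viaVertex hb _ hq hap hbq
  | head hac _ ih =>
    obtain ⟨ha, hc, e, he⟩ := hac
    obtain ⟨s, hs⟩ := D.covers_edge e
    have has := hs _ (he ▸ Sym2.mem_mk_left _ _)
    have hcs := hs _ (he ▸ Sym2.mem_mk_right _ _)
    exact (viaVertex ha _ ⟨_, ha, has⟩ hap has).trans (ih s hc hcs)

end TreeDecomp

namespace KFreeDecomp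

variable {G : MGraph} {K : Set G.V} (D : KFreeDecomp G K)

lemma mem_bag_of_mem_L {v w : G.V} {t : D.ι} (hv : v ∈ D.L) (hvt : v ∈ D.bag t) {e : G.E}
    (he : G.ends e = s(v, w)) : w ∈ D.bag t := by
  obtain ⟨s, hs⟩ := D.covers_edge e
  obtain ⟨_, -, huniq⟩ := D.unique_bag v hv
  rw [huniq t hvt, ← huniq s (hs v (he ▸ Sym2.mem_mk_left v w))]
  exact hs w (he ▸ Sym2.mem_mk_right v w)

lemma inter_bag_diff_L_nonempty {S : Set G.V} (hS : G.IsPreconnectedSet S)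
    (hSK : (S ∩ K).Nonempty) {t : D.ι} (hSt : (S ∩ D.bag t).Nonempty) :
    (S ∩ (D.bag t \ D.L)).Nonempty := by
  obtain ⟨r, hrS, hrK⟩ := hSK
  obtain ⟨v, hvS, hvt⟩ := hSt
  have hrL : r ∉ D.L := Set.disjoint_right.mp D.L_disj hrK
  induction hS v hvS r hrS using Relation.ReflTransGen.head_induction_on with
  | refl => exact ⟨r, hrS, hvt, hrL⟩
  | @head v c hvc _ ih =>
    obtain ⟨hvS, hcS, e, he⟩ := hvc
    by_cases hvL : v ∈ D.L
    · exact ih hcS (D.mem_bag_of_mem_L hvL hvt he)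
    · exact ⟨v, hvS, hvt, hvL⟩

lemma ncard_bag_diff_L_le_width_add_one (t : D.ι) : (D.bag t \ D.L).ncard ≤ D.width + 1 := by
  have hbdd : BddAbove (Set.range fun t => (D.bag t \ D.L).ncard - 1) :=
    ⟨Nat.card G.V, by rintro _ ⟨t, rfl⟩; exact (Nat.sub_le _ _).trans (Set.ncard_le_card _)⟩
  have := le_ciSup hbdd t
  unfold width
  omega

def single (G : MGraph) (K : Set G.V) : KFreeDecomp G K where
  ι := PUnit
  tree := ⊥
  isTree := .of_subsingleton
  bag _ := Set.univ
  covers_vertex _ := ⟨.unit, trivial⟩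
  covers_edge _ := ⟨.unit, fun _ _ => trivial⟩
  bag_connected v :=
    have : Nonempty {_t : PUnit | v ∈ Set.univ} := ⟨⟨.unit, trivial⟩⟩
    SimpleGraph.IsTree.of_subsingleton.connected
  L := ∅
  L_disj := Set.empty_disjoint K
  unique_bag _ h := absurd h (Set.notMem_empty _)
  leaf_bag _ h := absurd h (Set.notMem_empty _)

theorem exists_le_two_mul_ncard_of_isRootedMinor_grid {n : ℕ}
    (h : IsRootedMinor (gridGraph (n + 1)) (firstRow (n + 1)) G K) :
    ∃ t, n + 1 ≤ 2 * (D.bag t \ D.L).ncard := by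
  obtain ⟨M, hroot⟩ := h
  let X i := M.branchUnion (gridCross (n + 1) i)
  have hX i : G.IsPreconnectedSet (X i) :=
    M.isPreconnectedSet_branchUnion (isPreconnectedSet_gridCross i)
  have hXX i j : (X i ∩ X j).Nonempty :=
    (M.bs_nonempty (j, i)).mono fun _ hx =>
      ⟨M.bs_subset_branchUnion (Or.inr rfl) hx, M.bs_subset_branchUnion (Or.inl rfl) hx⟩
  have hXK i : (X i ∩ K).Nonempty :=
    (hroot (0, i) rfl).mono (Set.inter_subset_inter_left K (M.bs_subset_branchUnion (Or.inr rfl)))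
  obtain ⟨t, ht⟩ := D.isTree.isAcyclic.exists_forall_mem_of_pairwise_inter_nonempty
    (fun i => D.nodesMeeting (X i)) (fun i => D.preconnected_induce_nodesMeeting (hX i))
    fun i j => D.nodesMeeting_inter_nonempty (hXX i j)
  have hXt i : (X i ∩ (D.bag t \ D.L)).Nonempty :=
    D.inter_bag_diff_L_nonempty (hX i) (hXK i) (ht i)
  choose f hfX hfB using hXt
  exact ⟨t, M.le_two_mul_ncard_of_forall_mem_cross f hfX hfB⟩

end KFreeDecomp

-- `twK` is an `sInf` over `ℕ`, which is `0` on the empty set, so the bound needs `single`.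
lemma le_twK {G : MGraph} {K : Set G.V} {k : ℕ} (h : ∀ D : KFreeDecomp G K, k ≤ D.width) :
    k ≤ twK G K :=
  le_csInf ⟨_, KFreeDecomp.single G K, rfl⟩ fun _ ⟨D, hD⟩ => hD ▸ h D

/-- Containing the `(3k+1) × (3k+1)` grid rooted at its first
row as a rooted minor forces `K`-free treewidth at least `k`. -/
theorem statement_10 (k : ℕ) (G : MGraph) (K : Set G.V)
    (h : IsRootedMinor (gridGraph (3 * k + 1)) (firstRow (3 * k + 1)) G K) :
    k ≤ twK G K := by
  refine le_twK fun D => ?_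
  obtain ⟨t, ht⟩ := D.exists_le_two_mul_ncard_of_isRootedMinor_grid h
  have := D.ncard_bag_diff_L_le_width_add_one t
  omega

end TDMPaper
end

section
/- In the (3k+1)×(3k+1) grid W with K the vertex set of its first row, K is highly connected: for any subsets A, B ⊆ K, there exist min{|A|,|B|} pairwise vertex-disjoint paths in W each with one end in A and one end in B. -/
namespace TDMPaper

open MGraph

/-! ### Auxiliary material for Statement 11 -/

section Statement11Aux

/-- length of the U-path -/
def plen (c d r : ℕ) : ℕ := 2 * r + (max c d - min c d)

/-- row of the t-th vertex of the U-path -/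
def pvr (c d r t : ℕ) : ℕ :=
  if t ≤ r then t else if t ≤ r + (max c d - min c d) then r else 2 * r + (max c d - min c d) - t

/-- column of the t-th vertex of the U-path -/
def pvc (c d r t : ℕ) : ℕ :=
  if t ≤ r then c
  else if t ≤ r + (max c d - min c d) then (if c ≤ d then c + (t - r) else c - (t - r))
  else d

lemma pv_inj {c d r : ℕ} (hcd : c ≠ d) {t t' : ℕ} (ht : t ≤ plen c d r) (ht' : t' ≤ plen c d r)
    (h1 : pvr c d r t = pvr c d r t') (h2 : pvc c d r t = pvc c d r t') : t = t' := by
  unfold plen at ht ht'; unfold pvr at h1; unfold pvc at h2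
  split_ifs at h1 h2 <;> omega

lemma pv_adj {c d r : ℕ} (hcd : c ≠ d) (hr : 1 ≤ r) {t : ℕ} (ht : t < plen c d r) :
    gridAdj (pvr c d r t, pvc c d r t) (pvr c d r (t+1), pvc c d r (t+1)) := by
  unfold plen at ht; unfold gridAdj pvr pvc
  split_ifs <;> simp <;> omega

lemma pv_bound {c d r : ℕ} {t : ℕ} (ht : t ≤ plen c d r) :
    pvr c d r t ≤ r ∧ min c d ≤ pvc c d r t ∧ pvc c d r t ≤ max c d := by
  unfold plen at ht; unfold pvr pvc; split_ifs <;> omega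

lemma pv_zero (c d r : ℕ) : pvr c d r 0 = 0 ∧ pvc c d r 0 = c := by
  unfold pvr pvc; simp

lemma pv_last {c d r : ℕ} (hcd : c ≠ d) (hr : 1 ≤ r) :
    pvr c d r (plen c d r) = 0 ∧ pvc c d r (plen c d r) = d := by
  unfold pvr pvc plen; split_ifs <;> omega

lemma pv_row0 {c d r : ℕ} {t : ℕ} (hr : 1 ≤ r) (ht : t ≤ plen c d r)
    (h : pvr c d r t = 0) : pvc c d r t = c ∨ pvc c d r t = d := by
  unfold plen at ht; unfold pvr at h; unfold pvc; split_ifs at h ⊢ <;> omega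

lemma pv_disj {c₁ d₁ r₁ c₂ d₂ r₂ : ℕ}
    (h12 : c₁ ≠ c₂) (h13 : c₁ ≠ d₂) (h42 : d₁ ≠ c₂) (h43 : d₁ ≠ d₂)
    (hc1 : c₁ ≠ d₁) (hc2 : c₂ ≠ d₂)
    (hr₁ : 1 ≤ r₁) (hr₂ : 1 ≤ r₂)
    (hND : max c₁ d₁ < min c₂ d₂ ∨ max c₂ d₂ < min c₁ d₁ ∨
      (min c₁ d₁ < min c₂ d₂ ∧ max c₂ d₂ < max c₁ d₁) ∨
      (min c₂ d₂ < min c₁ d₁ ∧ max c₁ d₁ < max c₂ d₂))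
    (hn21 : (min c₁ d₁ < min c₂ d₂ ∧ max c₂ d₂ < max c₁ d₁) → r₂ < r₁)
    (hn12 : (min c₂ d₂ < min c₁ d₁ ∧ max c₁ d₁ < max c₂ d₂) → r₁ < r₂)
    {t t' : ℕ} (ht : t ≤ plen c₁ d₁ r₁) (ht' : t' ≤ plen c₂ d₂ r₂) :
    pvr c₁ d₁ r₁ t ≠ pvr c₂ d₂ r₂ t' ∨ pvc c₁ d₁ r₁ t ≠ pvc c₂ d₂ r₂ t' := by
  unfold plen at ht ht'; unfold pvr pvc; split_ifs <;> omega

/-- Non-crossing condition for the intervals `[min (a i) (b i), max (a i) (b i)]`. -/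
def NCross {q : ℕ} (a b : Fin q → ℕ) : Prop :=
  ∀ i j, i ≠ j →
    max (a i) (b i) < min (a j) (b j) ∨ max (a j) (b j) < min (a i) (b i) ∨
    (min (a i) (b i) < min (a j) (b j) ∧ max (a j) (b j) < max (a i) (b i)) ∨
    (min (a j) (b j) < min (a i) (b i) ∧ max (a i) (b i) < max (a j) (b j))

/-- Existence of a non-crossing matching between two disjoint sets of naturals. -/
lemma matching_lemma : ∀ (q : ℕ) (S T : Finset ℕ), Disjoint S T → S.card = q → T.card = q →
    ∃ a b : Fin q → ℕ, (∀ i, a i ∈ S) ∧ (∀ i, b i ∈ T) ∧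
      Function.Injective a ∧ Function.Injective b ∧ NCross a b := by
  intro q
  induction q with
  | zero =>
    intro S T _ _ _
    exact ⟨Fin.elim0, Fin.elim0, fun i => i.elim0, fun i => i.elim0,
      fun i => i.elim0, fun i => i.elim0, fun i => i.elim0⟩
  | succ q ih =>
    intro S T hST hS hT
    have hSne : (S ×ˢ T).Nonempty := by
      rw [Finset.nonempty_product]
      constructor <;> rw [← Finset.card_pos] <;> omega
    obtain ⟨⟨x, y⟩, hxy, hmin⟩ :=
      Finset.exists_min_image (S ×ˢ T) (fun p => max p.1 p.2 - min p.1 p.2) hSne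
    rw [Finset.mem_product] at hxy
    obtain ⟨hxS, hyT⟩ := hxy
    have key : ∀ z ∈ S ∪ T, ¬ (min x y < z ∧ z < max x y) := by
      rintro z hz ⟨hz1, hz2⟩
      rw [Finset.mem_union] at hz
      rcases hz with hz | hz
      · have := hmin (z, y) (Finset.mem_product.mpr ⟨hz, hyT⟩)
        simp only at this; omega
      · have := hmin (x, z) (Finset.mem_product.mpr ⟨hxS, hz⟩)
        simp only at this; omega
    obtain ⟨a', b', ha'S, hb'T, ha'inj, hb'inj, hNC'⟩ :=
      ih (S.erase x) (T.erase y)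
        (hST.mono (Finset.erase_subset _ _) (Finset.erase_subset _ _))
        (by rw [Finset.card_erase_of_mem hxS]; omega)
        (by rw [Finset.card_erase_of_mem hyT]; omega)
    have hout : ∀ j', (¬ (min x y < a' j' ∧ a' j' < max x y)) ∧ a' j' ≠ x ∧ a' j' ≠ y ∧
        (¬ (min x y < b' j' ∧ b' j' < max x y)) ∧ b' j' ≠ x ∧ b' j' ≠ y := by
      intro j'
      have haS := ha'S j'
      have hbT := hb'T j'
      refine ⟨key _ (Finset.mem_union_left _ (Finset.mem_of_mem_erase haS)), ?_, ?_,
        key _ (Finset.mem_union_right _ (Finset.mem_of_mem_erase hbT)), ?_, ?_⟩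
      · exact Finset.ne_of_mem_erase haS
      · exact fun h => (Finset.disjoint_left.mp hST (Finset.mem_of_mem_erase haS)) (h ▸ hyT)
      · exact fun h => (Finset.disjoint_left.mp hST hxS) (h ▸ Finset.mem_of_mem_erase hbT)
      · exact Finset.ne_of_mem_erase hbT
    refine ⟨Fin.cons x a', Fin.cons y b', ?_, ?_, ?_, ?_, ?_⟩
    · intro i
      rcases Fin.eq_zero_or_eq_succ i with rfl | ⟨i', rfl⟩
      · simpa using hxS
      · simpa using Finset.mem_of_mem_erase (ha'S i')
    · intro i
      rcases Fin.eq_zero_or_eq_succ i with rfl | ⟨i', rfl⟩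
      · simpa using hyT
      · simpa using Finset.mem_of_mem_erase (hb'T i')
    · intro i j h
      rcases Fin.eq_zero_or_eq_succ i with rfl | ⟨i', rfl⟩ <;>
        rcases Fin.eq_zero_or_eq_succ j with rfl | ⟨j', rfl⟩
      · rfl
      · simp only [Fin.cons_zero, Fin.cons_succ] at h
        exact absurd h.symm (Finset.ne_of_mem_erase (ha'S j'))
      · simp only [Fin.cons_zero, Fin.cons_succ] at h
        exact absurd h (Finset.ne_of_mem_erase (ha'S i'))
      · simp only [Fin.cons_succ] at h
        exact congrArg Fin.succ (ha'inj h)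
    · intro i j h
      rcases Fin.eq_zero_or_eq_succ i with rfl | ⟨i', rfl⟩ <;>
        rcases Fin.eq_zero_or_eq_succ j with rfl | ⟨j', rfl⟩
      · rfl
      · simp only [Fin.cons_zero, Fin.cons_succ] at h
        exact absurd h.symm (Finset.ne_of_mem_erase (hb'T j'))
      · simp only [Fin.cons_zero, Fin.cons_succ] at h
        exact absurd h (Finset.ne_of_mem_erase (hb'T i'))
      · simp only [Fin.cons_succ] at h
        exact congrArg Fin.succ (hb'inj h)
    · intro i j hij
      rcases Fin.eq_zero_or_eq_succ i with rfl | ⟨i', rfl⟩ <;>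
        rcases Fin.eq_zero_or_eq_succ j with rfl | ⟨j', rfl⟩
      · exact absurd rfl hij
      · simp only [Fin.cons_zero, Fin.cons_succ]
        have := hout j'; omega
      · simp only [Fin.cons_zero, Fin.cons_succ]
        have := hout i'; omega
      · simp only [Fin.cons_succ]
        exact hNC' i' j' (fun h => hij (congrArg Fin.succ h))

/-- The row at which the `i`-th pair is routed: one plus the number of pairs
strictly nested inside it. -/
def rowOf {q : ℕ} (a b : Fin q → ℕ) (i : Fin q) : ℕ :=
  (Finset.univ.filter (fun j =>
    min (a i) (b i) < min (a j) (b j) ∧ max (a j) (b j) < max (a i) (b i))).card + 1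

lemma rowOf_pos {q : ℕ} (a b : Fin q → ℕ) (i : Fin q) : 1 ≤ rowOf a b i :=
  Nat.le_add_left _ _

lemma rowOf_le {q : ℕ} (a b : Fin q → ℕ) (i : Fin q) : rowOf a b i ≤ q := by
  have hsub : (Finset.univ.filter (fun j =>
      min (a i) (b i) < min (a j) (b j) ∧ max (a j) (b j) < max (a i) (b i)))
      ⊆ Finset.univ.erase i := by
    intro j hj
    rw [Finset.mem_filter] at hj
    refine Finset.mem_erase.mpr ⟨?_, Finset.mem_univ _⟩
    rintro rfl
    omega
  have := Finset.card_le_card hsub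
  rw [Finset.card_erase_of_mem (Finset.mem_univ _), Finset.card_univ, Fintype.card_fin] at this
  have hq : 0 < q := i.pos
  unfold rowOf
  omega

lemma rowOf_mono {q : ℕ} (a b : Fin q → ℕ) {i j : Fin q}
    (h : min (a i) (b i) < min (a j) (b j) ∧ max (a j) (b j) < max (a i) (b i)) :
    rowOf a b j < rowOf a b i := by
  have hss : (Finset.univ.filter (fun l =>
      min (a j) (b j) < min (a l) (b l) ∧ max (a l) (b l) < max (a j) (b j)))
      ⊂ (Finset.univ.filter (fun l =>
      min (a i) (b i) < min (a l) (b l) ∧ max (a l) (b l) < max (a i) (b i))) := by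
    rw [Finset.ssubset_iff_of_subset]
    · refine ⟨j, ?_, ?_⟩
      · rw [Finset.mem_filter]; exact ⟨Finset.mem_univ _, h⟩
      · rw [Finset.mem_filter]; push_neg; intro _; omega
    · intro l hl
      rw [Finset.mem_filter] at hl ⊢
      refine ⟨Finset.mem_univ _, ?_⟩
      obtain ⟨_, hl⟩ := hl
      omega
  have := Finset.card_lt_card hss
  unfold rowOf
  omega

/-- An edge of the grid graph from an adjacency of coordinates. -/
def mkEdge (n : ℕ) (u v : (gridGraph n).V)
    (h : gridAdj (u.1.1, u.2.1) (v.1.1, v.2.1)) : (gridGraph n).E :=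
  ⟨s(u, v), u, v, h, rfl⟩

/-- A path in the grid graph built from a coordinate function. -/
def gridPath (n L : ℕ) (f : ℕ → ℕ × ℕ)
    (hb : ∀ t, t ≤ L → (f t).1 < n ∧ (f t).2 < n)
    (hinj : ∀ t, t ≤ L → ∀ t', t' ≤ L → f t = f t' → t = t')
    (hadj : ∀ t, t < L → gridAdj (f t) (f (t+1))) : (gridGraph n).Path where
  n := L
  vtx := fun t => (⟨(f t.1).1, (hb t.1 (Nat.lt_succ_iff.mp t.2)).1⟩,
    ⟨(f t.1).2, (hb t.1 (Nat.lt_succ_iff.mp t.2)).2⟩)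
  edge := fun t => mkEdge n
    (⟨(f t.1).1, (hb t.1 (le_of_lt t.2)).1⟩, ⟨(f t.1).2, (hb t.1 (le_of_lt t.2)).2⟩)
    (⟨(f (t.1+1)).1, (hb (t.1+1) t.2).1⟩, ⟨(f (t.1+1)).2, (hb (t.1+1) t.2).2⟩)
    (hadj t.1 t.2)
  vtx_inj := by
    intro s t h
    have h2 : f s.1 = f t.1 := congrArg (fun p => (p.1.1, p.2.1)) h
    exact Fin.ext (hinj s.1 (Nat.lt_succ_iff.mp s.2) t.1 (Nat.lt_succ_iff.mp t.2) h2)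
  ends_eq := fun i => rfl

lemma gridPath_mem_support (n L : ℕ) (f : ℕ → ℕ × ℕ) (hb) (hinj) (hadj) {x}
    (hx : x ∈ (gridPath n L f hb hinj hadj).support) :
    ∃ t, t ≤ L ∧ x.1.1 = (f t).1 ∧ x.2.1 = (f t).2 := by
  obtain ⟨t, rfl⟩ := hx
  exact ⟨t.1, Nat.lt_succ_iff.mp t.2, rfl, rfl⟩

lemma gridPath_first (n L : ℕ) (f : ℕ → ℕ × ℕ) (hb) (hinj) (hadj) :
    ((gridPath n L f hb hinj hadj).first.1.1 = (f 0).1 ∧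
     (gridPath n L f hb hinj hadj).first.2.1 = (f 0).2) := by
  show (f ((0 : Fin (L+1)) : ℕ)).1 = (f 0).1 ∧ (f ((0 : Fin (L+1)) : ℕ)).2 = (f 0).2
  rw [Fin.val_zero]
  exact ⟨rfl, rfl⟩

lemma gridPath_last (n L : ℕ) (f : ℕ → ℕ × ℕ) (hb) (hinj) (hadj) :
    ((gridPath n L f hb hinj hadj).last.1.1 = (f L).1 ∧
     (gridPath n L f hb hinj hadj).last.2.1 = (f L).2) := ⟨rfl, rfl⟩

/-- The one-vertex path. -/
def trivPath (n : ℕ) (v : (gridGraph n).V) : (gridGraph n).Path where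
  n := 0
  vtx := fun _ => v
  edge := Fin.elim0
  vtx_inj := fun s t _ => Fin.ext (by omega)
  ends_eq := fun i => i.elim0

lemma trivPath_support (n : ℕ) (v : (gridGraph n).V) :
    (trivPath n v).support = {v} := Set.range_const

end Statement11Aux


/-- In the `(3k+1) × (3k+1)` grid, the first row is highly
connected: any `A, B` inside it are linked by `min{|A|,|B|}` pairwise
vertex-disjoint `(A,B)`-paths. -/
theorem statement_11 (k : ℕ) (A B : Set (gridGraph (3 * k + 1)).V)
    (hA : A ⊆ firstRow (3 * k + 1)) (hB : B ⊆ firstRow (3 * k + 1)) :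
    ∃ P : Fin (min A.ncard B.ncard) → (gridGraph (3 * k + 1)).Path,
      (∀ i, ((P i).first ∈ A ∧ (P i).last ∈ B) ∨
        ((P i).first ∈ B ∧ (P i).last ∈ A)) ∧
      ∀ i j, i ≠ j → Disjoint ((P i).support) ((P j).support) := by
  classical
  set m := min A.ncard B.ncard with hm
  set tN := (A ∩ B).ncard with htN
  have coordEq : ∀ (x y : (gridGraph (3*k+1)).V), x.1.1 = y.1.1 → x.2.1 = y.2.1 → x = y :=
    fun x y h1 h2 => Prod.ext (Fin.ext h1) (Fin.ext h2)
  by_cases hcase : m ≤ tN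
  · -- all paths are trivial
    obtain ⟨J, hJsub, hJcard⟩ := Finset.exists_subset_card_eq
      (s := (A ∩ B).toFinite.toFinset) (n := m)
      (by rw [← Set.ncard_eq_toFinset_card (A ∩ B) (Set.toFinite _)]; exact hcase)
    set g : Fin m → (gridGraph (3*k+1)).V :=
      fun i => ((Finset.equivFinOfCardEq hJcard).symm i).1 with hg
    have hginj : Function.Injective g :=
      fun i j h => (Finset.equivFinOfCardEq hJcard).symm.injective (Subtype.ext h)
    have hgmem : ∀ i, g i ∈ A ∩ B := fun i =>
      (Set.Finite.mem_toFinset _).mp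
        (hJsub ((Finset.equivFinOfCardEq hJcard).symm i).2)
    refine ⟨fun i => trivPath (3*k+1) (g i), fun i => Or.inl ⟨(hgmem i).1, (hgmem i).2⟩,
      fun i j hij => ?_⟩
    rw [trivPath_support, trivPath_support]
    exact Set.disjoint_singleton.mpr (fun h => hij (hginj h))
  · push_neg at hcase
    set q := m - tN with hq
    have hq1 : 1 ≤ q := by omega
    have hmA : m ≤ A.ncard := min_le_left _ _
    have hmB : m ≤ B.ncard := min_le_right _ _
    have hAsplit : (A ∩ B).ncard + (A \ B).ncard = A.ncard :=
      Set.ncard_inter_add_ncard_diff_eq_ncard A B (Set.toFinite _)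
    have hBsplit : (B ∩ A).ncard + (B \ A).ncard = B.ncard :=
      Set.ncard_inter_add_ncard_diff_eq_ncard B A (Set.toFinite _)
    have hBA : (B ∩ A).ncard = tN := by rw [Set.inter_comm]
    obtain ⟨FA, hFAsub, hFAcard⟩ := Finset.exists_subset_card_eq
      (s := (A \ B).toFinite.toFinset) (n := q)
      (by rw [← Set.ncard_eq_toFinset_card (A \ B) (Set.toFinite _)]; omega)
    obtain ⟨FB, hFBsub, hFBcard⟩ := Finset.exists_subset_card_eq
      (s := (B \ A).toFinite.toFinset) (n := q)
      (by rw [← Set.ncard_eq_toFinset_card (B \ A) (Set.toFinite _)]; omega)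
    have hFA : ∀ u ∈ FA, u ∈ A \ B := fun u hu => (Set.Finite.mem_toFinset _).mp (hFAsub hu)
    have hFB : ∀ u ∈ FB, u ∈ B \ A := fun u hu => (Set.Finite.mem_toFinset _).mp (hFBsub hu)
    set I := (A ∩ B).toFinite.toFinset with hI
    have hIcard : I.card = tN := (Set.ncard_eq_toFinset_card _ _).symm
    set col : (gridGraph (3*k+1)).V → ℕ := fun p => p.2.1 with hcol
    have hcolinj : ∀ u ∈ firstRow (3*k+1), ∀ v ∈ firstRow (3*k+1), col u = col v → u = v := by
      intro u hu v hv h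
      have hu' : u.1.1 = 0 := hu
      have hv' : v.1.1 = 0 := hv
      exact coordEq u v (hu'.trans hv'.symm) h
    have hfrA : ∀ u ∈ FA, u ∈ firstRow (3*k+1) := fun u hu => hA (hFA u hu).1
    have hfrB : ∀ u ∈ FB, u ∈ firstRow (3*k+1) := fun u hu => hB (hFB u hu).1
    have hfrI : ∀ u ∈ I, u ∈ firstRow (3*k+1) := fun u hu =>
      hA ((Set.Finite.mem_toFinset _).mp hu).1
    set colsA := FA.image col with hcolsA
    set colsB := FB.image col with hcolsB
    set colsI := I.image col with hcolsI
    have hcolsAcard : colsA.card = q := by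
      rw [hcolsA, Finset.card_image_of_injOn, hFAcard]
      intro u hu v hv h
      exact hcolinj u (hfrA u hu) v (hfrA v hv) h
    have hcolsBcard : colsB.card = q := by
      rw [hcolsB, Finset.card_image_of_injOn, hFBcard]
      intro u hu v hv h
      exact hcolinj u (hfrB u hu) v (hfrB v hv) h
    have hABdisj : Disjoint colsA colsB := by
      rw [Finset.disjoint_left]
      intro c hcA hcB
      obtain ⟨u, hu, rfl⟩ := Finset.mem_image.mp hcA
      obtain ⟨v, hv, hvc⟩ := Finset.mem_image.mp hcB
      have heq := hcolinj v (hfrB v hv) u (hfrA u hu) hvc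
      exact (hFA u hu).2 (heq ▸ (hFB v hv).1)
    have hAIdisj : Disjoint colsA colsI := by
      rw [Finset.disjoint_left]
      intro c hcA hcI
      obtain ⟨u, hu, rfl⟩ := Finset.mem_image.mp hcA
      obtain ⟨v, hv, hvc⟩ := Finset.mem_image.mp hcI
      have heq := hcolinj v (hfrI v hv) u (hfrA u hu) hvc
      exact (hFA u hu).2 (heq ▸ ((Set.Finite.mem_toFinset _).mp hv).2)
    have hBIdisj : Disjoint colsB colsI := by
      rw [Finset.disjoint_left]
      intro c hcB hcI
      obtain ⟨u, hu, rfl⟩ := Finset.mem_image.mp hcB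
      obtain ⟨v, hv, hvc⟩ := Finset.mem_image.mp hcI
      have heq := hcolinj v (hfrI v hv) u (hfrB u hu) hvc
      exact (hFB u hu).2 (heq ▸ ((Set.Finite.mem_toFinset _).mp hv).1)
    have hcols_lt : ∀ c ∈ colsA ∪ colsB, c < 3*k+1 := by
      intro c hc
      rw [Finset.mem_union] at hc
      rcases hc with hc | hc <;> obtain ⟨u, _, rfl⟩ := Finset.mem_image.mp hc <;> exact u.2.2
    have h2q : 2 * q ≤ 3*k+1 := by
      have hsub : colsA ∪ colsB ⊆ Finset.range (3*k+1) :=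
        fun c hc => Finset.mem_range.mpr (hcols_lt c hc)
      have hle := Finset.card_le_card hsub
      rw [Finset.card_union_of_disjoint hABdisj, Finset.card_range, hcolsAcard,
        hcolsBcard] at hle
      omega
    have hq3k : q ≤ 3 * k := by omega
    obtain ⟨a, b, haS, hbT, hainj, hbinj, hNC⟩ :=
      matching_lemma q colsA colsB hABdisj hcolsAcard hcolsBcard
    have haLt : ∀ i, a i < 3*k+1 := fun i => hcols_lt _ (Finset.mem_union_left _ (haS i))
    have hbLt : ∀ i, b i < 3*k+1 := fun i => hcols_lt _ (Finset.mem_union_right _ (hbT i))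
    have hab_ne : ∀ i j, a i ≠ b j :=
      fun i j h => Finset.disjoint_left.mp hABdisj (haS i) (h ▸ hbT j)
    set r : Fin q → ℕ := rowOf a b with hr
    have hrpos : ∀ i, 1 ≤ r i := rowOf_pos a b
    have hrlt : ∀ i, r i < 3*k+1 := by
      intro i
      have h1 : r i ≤ q := rowOf_le a b i
      omega
    have habne : ∀ i : Fin q, a i ≠ b i := fun i => hab_ne i i
    set L : Fin q → ℕ := fun i => plen (a i) (b i) (r i) with hL
    set f : Fin q → ℕ → ℕ × ℕ :=
      fun i t => (pvr (a i) (b i) (r i) t, pvc (a i) (b i) (r i) t) with hf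
    have hfb : ∀ i t, t ≤ L i → (f i t).1 < 3*k+1 ∧ (f i t).2 < 3*k+1 := by
      intro i t ht
      obtain ⟨h1, h2, h3⟩ := pv_bound (c := a i) (d := b i) (r := r i) ht
      have h4 := hrlt i
      have h5 := haLt i
      have h6 := hbLt i
      constructor
      · show pvr (a i) (b i) (r i) t < 3*k+1; omega
      · show pvc (a i) (b i) (r i) t < 3*k+1; omega
    have hfinj : ∀ i t, t ≤ L i → ∀ t', t' ≤ L i → f i t = f i t' → t = t' := by
      intro i t ht t' ht' h
      rw [Prod.ext_iff] at h
      exact pv_inj (habne i) ht ht' h.1 h.2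
    have hfadj : ∀ i t, t < L i → gridAdj (f i t) (f i (t+1)) :=
      fun i t ht => pv_adj (habne i) (hrpos i) ht
    set Q : Fin q → (gridGraph (3*k+1)).Path :=
      fun i => gridPath (3*k+1) (L i) (f i) (hfb i) (hfinj i) (hfadj i) with hQ
    have topA : ∀ i : Fin q, ∃ u, u ∈ A \ B ∧ u.1.1 = 0 ∧ u.2.1 = a i := by
      intro i
      obtain ⟨u, hu, huc⟩ := Finset.mem_image.mp (haS i)
      exact ⟨u, hFA u hu, hfrA u hu, huc⟩
    have topB : ∀ i : Fin q, ∃ u, u ∈ B \ A ∧ u.1.1 = 0 ∧ u.2.1 = b i := by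
      intro i
      obtain ⟨u, hu, huc⟩ := Finset.mem_image.mp (hbT i)
      exact ⟨u, hFB u hu, hfrB u hu, huc⟩
    have hQfirst : ∀ i, (Q i).first ∈ A \ B := by
      intro i
      obtain ⟨u, huAB, hur, huc⟩ := topA i
      obtain ⟨e1, e2⟩ := gridPath_first (3*k+1) (L i) (f i) (hfb i) (hfinj i) (hfadj i)
      have hx : (Q i).first = u := by
        refine coordEq _ _ ?_ ?_
        · rw [e1, hur]; exact (pv_zero (a i) (b i) (r i)).1
        · rw [e2, huc]; exact (pv_zero (a i) (b i) (r i)).2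
      rw [hx]; exact huAB
    have hQlast : ∀ i, (Q i).last ∈ B \ A := by
      intro i
      obtain ⟨u, huBA, hur, huc⟩ := topB i
      obtain ⟨e1, e2⟩ := gridPath_last (3*k+1) (L i) (f i) (hfb i) (hfinj i) (hfadj i)
      have hx : (Q i).last = u := by
        refine coordEq _ _ ?_ ?_
        · rw [e1, hur]; exact (pv_last (habne i) (hrpos i)).1
        · rw [e2, huc]; exact (pv_last (habne i) (hrpos i)).2
      rw [hx]; exact huBA
    have hQdisj : ∀ i j, i ≠ j → Disjoint (Q i).support (Q j).support := by
      intro i j hij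
      rw [Set.disjoint_left]
      intro x hxi hxj
      obtain ⟨t, ht, hx1, hx2⟩ :=
        gridPath_mem_support (3*k+1) (L i) (f i) (hfb i) (hfinj i) (hfadj i) hxi
      obtain ⟨t', ht', hy1, hy2⟩ :=
        gridPath_mem_support (3*k+1) (L j) (f j) (hfb j) (hfinj j) (hfadj j) hxj
      have hd := pv_disj (c₁ := a i) (d₁ := b i) (r₁ := r i)
        (c₂ := a j) (d₂ := b j) (r₂ := r j)
        (fun h => hij (hainj h)) (hab_ne i j) (Ne.symm (hab_ne j i))
        (fun h => hij (hbinj h)) (habne i) (habne j) (hrpos i) (hrpos j)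
        (hNC i j hij) (fun h => rowOf_mono a b h) (fun h => rowOf_mono a b h) ht ht'
      rcases hd with h | h
      · exact h (hx1.symm.trans hy1)
      · exact h (hx2.symm.trans hy2)
    have gEnum := Finset.equivFinOfCardEq hIcard
    set g : Fin tN → (gridGraph (3*k+1)).V := fun i => (gEnum.symm i).1 with hg
    have hginj : Function.Injective g :=
      fun i j h => gEnum.symm.injective (Subtype.ext h)
    have hgmem : ∀ i, g i ∈ A ∩ B := fun i =>
      (Set.Finite.mem_toFinset _).mp (gEnum.symm i).2
    have hgI : ∀ i, g i ∈ I := fun i => (gEnum.symm i).2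
    have hTQdisj : ∀ (v : (gridGraph (3*k+1)).V), v ∈ I → ∀ j : Fin q,
        Disjoint (trivPath (3*k+1) v).support (Q j).support := by
      intro v hvI j
      rw [trivPath_support, Set.disjoint_left]
      intro x hx hxq
      rw [Set.mem_singleton_iff] at hx
      subst hx
      obtain ⟨t, ht, hx1, hx2⟩ :=
        gridPath_mem_support (3*k+1) (L j) (f j) (hfb j) (hfinj j) (hfadj j) hxq
      have hv0 : x.1.1 = 0 := hfrI x hvI
      have hrow0 : pvr (a j) (b j) (r j) t = 0 := by
        have : x.1.1 = pvr (a j) (b j) (r j) t := hx1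
        omega
      have hcv : col x ∈ colsI := Finset.mem_image_of_mem col hvI
      have hx2' : col x = pvc (a j) (b j) (r j) t := hx2
      rcases pv_row0 (hrpos j) ht hrow0 with h | h
      · rw [h] at hx2'
        exact Finset.disjoint_left.mp hAIdisj (haS j) (hx2' ▸ hcv)
      · rw [h] at hx2'
        exact Finset.disjoint_left.mp hBIdisj (hbT j) (hx2' ▸ hcv)
    have hmtq : m = tN + q := by omega
    refine ⟨fun i => if h : i.1 < tN then trivPath (3*k+1) (g ⟨i.1, h⟩)
      else Q ⟨i.1 - tN, by have := i.2; omega⟩, ?_, ?_⟩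
    · intro i
      by_cases h : i.1 < tN
      · simp only [dif_pos h]
        exact Or.inl ⟨(hgmem ⟨i.1, h⟩).1, (hgmem ⟨i.1, h⟩).2⟩
      · simp only [dif_neg h]
        exact Or.inl ⟨(hQfirst _).1, (hQlast _).1⟩
    · intro i j hij
      by_cases hi : i.1 < tN <;> by_cases hj : j.1 < tN
      · simp only [dif_pos hi, dif_pos hj]; rw [trivPath_support, trivPath_support]
        refine Set.disjoint_singleton.mpr (fun h => hij ?_)
        have h' := congrArg Fin.val (hginj h)
        exact Fin.ext h'
      · simp only [dif_pos hi, dif_neg hj]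
        exact hTQdisj _ (hgI _) _
      · simp only [dif_neg hi, dif_pos hj]
        exact (hTQdisj _ (hgI _) _).symm
      · simp only [dif_neg hi, dif_neg hj]
        refine hQdisj _ _ (fun h => hij ?_)
        have h' := congrArg Fin.val h
        simp only at h'
        have hi' := i.2
        have hj' := j.2
        exact Fin.ext (by omega)


end TDMPaper
end
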